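/- If cvg(t', t) and t' ≠ t, then t' contains at least one input event that does not occur in t at the corresponding converging position; more precisely, the multiset of elements of t' minus those of t consists only of input events. -/

import Mathlib

inductive Cvg {σ : Type*} (inputs : Set σ) (inT : List σ → Set σ) :
    List σ → List σ → Prop
  | refl (t : List σ) : Cvg inputs inT t t
  | step (t₁ t₃ t : List σ) (ne : σ) (h₁ : t₁ <+: t) (h₂ : ne ∈ inputs)
      (h₃ : ne ∉ inT t₁) (h : Cvg inputs inT (t₁ ++ t₃) t) :
      Cvg inputs inT (t₁ ++ [ne] ++ t₃) t

namespace Cvg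

variable {σ : Type*} [DecidableEq σ] {inputs : Set σ} {inT : List σ → Set σ}

theorem count_le_of_notMem {t' t : List σ} {e : σ} (he : e ∉ inputs)
    (h : Cvg inputs inT t' t) : t'.count e ≤ t.count e := by
  induction h with
  | refl => exact le_rfl
  | step t₁ t₃ t ne _ hne _ _ ih =>
    have : ne ≠ e := fun h => he (h ▸ hne)
    simpa [List.count_append, List.count_singleton, this] using ih

end Cvg

theorem cvg_diff_inputs_general {σ : Type*} [DecidableEq σ] (inputs : Set σ)
    (inT : List σ → Set σ) (t' t : List σ) (h : Cvg inputs inT t' t) :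
    ∀ e : σ, t.count e < t'.count e → e ∈ inputs := by
  intro e hlt
  by_contra he
  exact (h.count_le_of_notMem he).not_gt hlt

/-- If `cvg(t', t)` and `t' ≠ t`, every event occurring strictly more often in
`t'` than in `t` is an input event. -/
theorem cvg_diff_inputs {σ : Type*} [DecidableEq σ] (inputs : Set σ)
    (inT : List σ → Set σ) (t' t : List σ) (h : Cvg inputs inT t' t)
    (hne : t' ≠ t) :
    ∀ e : σ, t.count e < t'.count e → e ∈ inputs :=
  cvg_diff_inputs_general inputs inT t' t h
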